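/- If an ordered partition P = {C_j} refines P* = {C*_j} compatibly (each C_j ⊆ C*_{i(j)} with i(j) nondecreasing in j), then the smallest 1−α confidence limit under P dominates that under P*: L*_S(z) ≤ L_S(z) for all z ∈ S. -/

import Mathlib

open Finset
open scoped Classical

noncomputable section

/-- Binomial probability mass function `P(X = x)` for `X ~ Bin(n, p)`. -/
def binomPMF (n : ℕ) (p : ℝ) (x : ℕ) : ℝ :=
  (n.choose x : ℝ) * p ^ x * (1 - p) ^ (n - x)

/-- Probability of a set `T` of sample points under independent `X ~ Bin(n,p₁)`, `Y ~ Bin(m,p₀)`. -/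
def prob (n m : ℕ) (p₁ p₀ : ℝ) (T : Finset (ℕ × ℕ)) : ℝ :=
  ∑ z ∈ T, binomPMF n p₁ z.1 * binomPMF m p₀ z.2

/-- The range `D(Δ)` of the nuisance parameter `p₀`: `[0, 1-Δ]` if `Δ ≥ 0`, `[-Δ, 1]` if `Δ ≤ 0`. -/
def Dset (Δ : ℝ) : Set ℝ :=
  {p₀ | 0 ≤ p₀ ∧ p₀ ≤ 1 ∧ 0 ≤ p₀ + Δ ∧ p₀ + Δ ≤ 1}

/-- The sample space `S = {(x,y) : 0 ≤ x ≤ n, 0 ≤ y ≤ m}`. -/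
def sampleSpace (n m : ℕ) : Finset (ℕ × ℕ) :=
  Finset.range (n + 1) ×ˢ Finset.range (m + 1)

/-- `{C_j}` is an ordered partition of the sample space `S`. -/
def IsOrderedPartition (n m k₀ : ℕ) (C : Fin k₀ → Finset (ℕ × ℕ)) : Prop :=
  (∀ i j : Fin k₀, i ≠ j → Disjoint (C i) (C j)) ∧
  Finset.univ.biUnion C = sampleSpace n m ∧
  ∀ j, (C j).Nonempty

/-- `S_jᶜ`, the complement in `S` of `S_j = ∪_{i ≤ j} C_i`. -/
def SjCompl (n m k₀ : ℕ) (C : Fin k₀ → Finset (ℕ × ℕ)) (j : Fin k₀) : Finset (ℕ × ℕ) :=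
  (sampleSpace n m).filter (fun z => ¬ ∃ i, i ≤ j ∧ z ∈ C i)

/-- `f_j(Δ) = min_{p₀ ∈ D(Δ)} P_{(Δ,p₀)}(S_jᶜ)`. -/
def fj (n m k₀ : ℕ) (C : Fin k₀ → Finset (ℕ × ℕ)) (j : Fin k₀) (Δ : ℝ) : ℝ :=
  sInf ((fun p₀ => prob n m (p₀ + Δ) p₀ (SjCompl n m k₀ C j)) '' Dset Δ)

/-- `G_z = {Δ ∈ [-1,1] : f_j(Δ') ≥ 1-α for all Δ' < Δ}` (for `z ∈ C_j`). -/
def Gj (n m k₀ : ℕ) (α : ℝ) (C : Fin k₀ → Finset (ℕ × ℕ)) (j : Fin k₀) : Set ℝ :=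
  {Δ ∈ Set.Icc (-1 : ℝ) 1 | ∀ Δ' ∈ Set.Ico (-1 : ℝ) Δ, 1 - α ≤ fj n m k₀ C j Δ'}

/-- `L_S` on the block `C_j`: `sup G_z` if `G_z ≠ ∅`, and `-1` otherwise. -/
def LSj (n m k₀ : ℕ) (α : ℝ) (C : Fin k₀ → Finset (ℕ × ℕ)) (j : Fin k₀) : ℝ :=
  if (Gj n m k₀ α C j).Nonempty then sSup (Gj n m k₀ α C j) else -1

/-!
If `z ∈ C_j ⊆ C*_{ι j}`, every point outside `S*_{ι j} = ⋃_{i' ≤ ι j} C*_{i'}` also lies outside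
`S_j = ⋃_{i ≤ j} C_i`, because `C_i ⊆ C*_{ι i}` and `ι i ≤ ι j` for `i ≤ j`. So the tail
probabilities, and hence the minimised tails `f_j`, are larger under the finer partition; this
enlarges the set `G_z` and therefore its supremum `L_S(z)`.
-/

section Probability

variable {n m : ℕ} {p₁ p₀ : ℝ}

lemma binomPMF_nonneg {p : ℝ} (hp : p ∈ Set.Icc (0 : ℝ) 1) (x : ℕ) : 0 ≤ binomPMF n p x := by
  obtain ⟨hp₀, hp₁⟩ := hp
  have : 0 ≤ 1 - p := by linarith
  unfold binomPMF
  positivity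

lemma prob_nonneg (hp₁ : p₁ ∈ Set.Icc (0 : ℝ) 1) (hp₀ : p₀ ∈ Set.Icc (0 : ℝ) 1)
    (T : Finset (ℕ × ℕ)) : 0 ≤ prob n m p₁ p₀ T :=
  sum_nonneg fun _ _ => mul_nonneg (binomPMF_nonneg hp₁ _) (binomPMF_nonneg hp₀ _)

lemma prob_mono (hp₁ : p₁ ∈ Set.Icc (0 : ℝ) 1) (hp₀ : p₀ ∈ Set.Icc (0 : ℝ) 1)
    {T T' : Finset (ℕ × ℕ)} (hT : T ⊆ T') : prob n m p₁ p₀ T ≤ prob n m p₁ p₀ T' :=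
  sum_le_sum_of_subset_of_nonneg hT fun _ _ _ =>
    mul_nonneg (binomPMF_nonneg hp₁ _) (binomPMF_nonneg hp₀ _)

lemma prob_nonneg_of_mem_Dset {Δ : ℝ} (hp : p₀ ∈ Dset Δ) (T : Finset (ℕ × ℕ)) :
    0 ≤ prob n m (p₀ + Δ) p₀ T :=
  prob_nonneg ⟨hp.2.2.1, hp.2.2.2⟩ ⟨hp.1, hp.2.1⟩ T

lemma prob_mono_of_mem_Dset {Δ : ℝ} (hp : p₀ ∈ Dset Δ) {T T' : Finset (ℕ × ℕ)}
    (hT : T ⊆ T') : prob n m (p₀ + Δ) p₀ T ≤ prob n m (p₀ + Δ) p₀ T' :=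
  prob_mono ⟨hp.2.2.1, hp.2.2.2⟩ ⟨hp.1, hp.2.1⟩ hT

end Probability

section Refinement

variable {n m k₀ k₀' : ℕ} {C : Fin k₀ → Finset (ℕ × ℕ)} {C' : Fin k₀' → Finset (ℕ × ℕ)}

lemma fj_le_fj_of_SjCompl_subset {j : Fin k₀} {j' : Fin k₀'}
    (hS : SjCompl n m k₀' C' j' ⊆ SjCompl n m k₀ C j) (Δ : ℝ) :
    fj n m k₀' C' j' Δ ≤ fj n m k₀ C j Δ := by
  unfold fj
  rcases (Dset Δ).eq_empty_or_nonempty with hD | hD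
  · simp [hD]
  refine le_csInf (hD.image _) ?_
  rintro _ ⟨p₀, hp₀, rfl⟩
  have hbdd : BddBelow ((fun p₀ => prob n m (p₀ + Δ) p₀ (SjCompl n m k₀' C' j')) '' Dset Δ) :=
    ⟨0, by rintro _ ⟨q, hq, rfl⟩; exact prob_nonneg_of_mem_Dset hq _⟩
  exact (csInf_le hbdd ⟨p₀, hp₀, rfl⟩).trans (prob_mono_of_mem_Dset hp₀ hS)

lemma Gj_subset_Gj_of_fj_le {α : ℝ} {j : Fin k₀} {j' : Fin k₀'}
    (hf : ∀ Δ, fj n m k₀' C' j' Δ ≤ fj n m k₀ C j Δ) :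
    Gj n m k₀' α C' j' ⊆ Gj n m k₀ α C j :=
  fun _ ⟨hΔ, hG⟩ => ⟨hΔ, fun Δ' hΔ' => (hG Δ' hΔ').trans (hf Δ')⟩

lemma LSj_le_LSj_of_Gj_subset {α : ℝ} {j : Fin k₀} {j' : Fin k₀'}
    (hG : Gj n m k₀' α C' j' ⊆ Gj n m k₀ α C j) :
    LSj n m k₀' α C' j' ≤ LSj n m k₀ α C j := by
  have hbdd : BddAbove (Gj n m k₀ α C j) := ⟨1, fun _ hx => hx.1.2⟩
  unfold LSj
  by_cases hne' : (Gj n m k₀' α C' j').Nonempty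
  · rw [if_pos hne', if_pos (hne'.mono hG)]
    exact csSup_le_csSup hbdd hne' hG
  rw [if_neg hne']
  split_ifs with hne
  · obtain ⟨x, hx⟩ := hne
    exact hx.1.1.trans (le_csSup hbdd hx)
  · exact le_rfl

lemma SjCompl_subset_of_refines {ι : Fin k₀ → Fin k₀'} (hι : Monotone ι)
    (hsub : ∀ j, C j ⊆ C' (ι j)) (j : Fin k₀) :
    SjCompl n m k₀' C' (ι j) ⊆ SjCompl n m k₀ C j := by
  intro w hw
  rw [SjCompl, mem_filter] at hw ⊢
  exact ⟨hw.1, fun ⟨i, hij, hwi⟩ => hw.2 ⟨ι i, hι hij, hsub i hwi⟩⟩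

lemma eq_of_mem_of_refines (hC' : IsOrderedPartition n m k₀' C') {ι : Fin k₀ → Fin k₀'}
    (hsub : ∀ j, C j ⊆ C' (ι j)) {j : Fin k₀} {j' : Fin k₀'} {z : ℕ × ℕ}
    (hz : z ∈ C j) (hz' : z ∈ C' j') : j' = ι j := by
  by_contra hne
  exact disjoint_left.mp (hC'.1 j' (ι j) hne) hz' (hsub j hz)

end Refinement

theorem refinement_dominates_general
    (n m k₀ k₀' : ℕ) (α : ℝ)
    (C : Fin k₀ → Finset (ℕ × ℕ))
    (C' : Fin k₀' → Finset (ℕ × ℕ)) (hC' : IsOrderedPartition n m k₀' C')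
    (ι : Fin k₀ → Fin k₀') (hι : Monotone ι) (hsub : ∀ j : Fin k₀, C j ⊆ C' (ι j)) :
    ∀ (j : Fin k₀) (j' : Fin k₀'), ∀ z ∈ C j, z ∈ C' j' →
      LSj n m k₀' α C' j' ≤ LSj n m k₀ α C j := by
  intro j j' z hz hz'
  obtain rfl := eq_of_mem_of_refines hC' hsub hz hz'
  exact LSj_le_LSj_of_Gj_subset <| Gj_subset_Gj_of_fj_le <|
    fj_le_fj_of_SjCompl_subset (SjCompl_subset_of_refines hι hsub j)

/-- **Proposition 2.** If an ordered partition `P = {C_j}` refines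
`P* = {C*_j}` compatibly (each `C_j ⊆ C*_{i(j)}` with `i(j)` nondecreasing), then the
smallest `1 - α` confidence limit under `P` dominates that under `P*`:
`L*_S(z) ≤ L_S(z)` for all `z ∈ S`. -/
theorem refinement_dominates
    (n m k₀ k₀' : ℕ) (α : ℝ) (hα : 0 ≤ α ∧ α < 1)
    (C : Fin k₀ → Finset (ℕ × ℕ)) (hC : IsOrderedPartition n m k₀ C)
    (C' : Fin k₀' → Finset (ℕ × ℕ)) (hC' : IsOrderedPartition n m k₀' C')
    (ι : Fin k₀ → Fin k₀') (hι : Monotone ι) (hsub : ∀ j : Fin k₀, C j ⊆ C' (ι j)) :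
    ∀ (j : Fin k₀) (j' : Fin k₀'), ∀ z ∈ C j, z ∈ C' j' →
      LSj n m k₀' α C' j' ≤ LSj n m k₀ α C j :=
  refinement_dominates_general n m k₀ k₀' α C C' hC' ι hι hsub
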